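/- A solution ψ on the class of monotone games satisfies AE (average efficiency), S (symmetry), I (invariance), cParM (c-participation monotonicity) and RcParM (relative c-participation monotonicity) if and only if ψ is the average participation solution AP; in particular AP is the unique solution on the class of monotone games satisfying these five properties. -/

import Mathlib

open Finset
open scoped Classical

/-- A monotone game on agent set `Fin n`: `u ∅ = 0` and `u` is monotone w.r.t. inclusion. -/
def IsMonotoneGame (n : ℕ) (u : Finset (Fin n) → ℝ) : Prop :=
  u ∅ = 0 ∧ ∀ S T : Finset (Fin n), S ⊆ T → u S ≤ u T

/-- The contribution indicator: `c(u,i) = 0` if `u (S ∪ {i}) = u S` for every `S`,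
and `c(u,i) = 1` otherwise. -/
noncomputable def contrib {n : ℕ} (u : Finset (Fin n) → ℝ) (i : Fin n) : ℝ :=
  if ∀ S : Finset (Fin n), u (insert i S) = u S then 0 else 1

/-- The average participation solution
`AP_i(u) = ∑_{S ⊆ N \ {i}} w ⬝ (c(u,i) / (∑_{j ∈ S} c(u,j) + 1)) ⬝ u (S ∪ {i})`,
where `w = 1 / (2 ^ n - 1)`. -/
noncomputable def AP {n : ℕ} (u : Finset (Fin n) → ℝ) (i : Fin n) : ℝ :=
  ∑ S ∈ (Finset.univ.erase i).powerset,
    (1 / (2 ^ n - 1 : ℝ)) * (contrib u i / ((∑ j ∈ S, contrib u j) + 1)) * u (insert i S)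

/-!
AP satisfies the five axioms by direct computation; the content is uniqueness. Two solutions
satisfying the axioms that agree on a monotone game `g` also agree on a monotone game `g'` with
the same contribution indicators, provided `g' - g` is symmetric among a set `A` of contributors
and vanishes on the coalitions `S ∪ {j}` of the other contributors `j`: invariance and cParM
leave the payoffs outside `A` unchanged, RcParM makes the increments on `A` equal, and AE fixes
their sum. Let `P` be the set of contributors of `u`. Starting from the symmetric game
`T ↦ (u(N) + 1)·|T ∩ P|`, on which S, I and AE already pin the solution down, add the values
`u(A)` one coalition `A ⊆ P` at a time, and finally remove the linear part. The linear part
outweighs the added values, so every intermediate game is monotone with contributor set `P`.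
-/

lemma Finset.sum_powerset_erase_insert {α β : Type*} [DecidableEq α] [AddCommMonoid β]
    {s : Finset α} {a : α} (ha : a ∈ s) (f : Finset α → β) :
    ∑ t ∈ (s.erase a).powerset, f (insert a t) = ∑ t ∈ s.powerset with a ∈ t, f t := by
  conv_rhs => rw [← insert_erase ha]
  rw [sum_filter, sum_powerset_insert (notMem_erase a s)]
  have hout : ∑ t ∈ (s.erase a).powerset, (if a ∈ t then f t else 0) = 0 :=
    sum_eq_zero fun t ht => if_neg fun hat => notMem_erase a s (mem_powerset.1 ht hat)
  simp only [hout, mem_insert_self, if_true, zero_add]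

lemma eq_zero_of_sum_eq_zero_of_eqOn {ι : Type*} [Fintype ι] {x : ι → ℝ} {A : Finset ι}
    (hout : ∀ j ∉ A, x j = 0) (hA : ∀ j ∈ A, ∀ k ∈ A, x j = x k) (hsum : ∑ j, x j = 0)
    (j : ι) : x j = 0 := by
  by_cases hj : j ∈ A
  · have hsumA : ∑ k, x k = #A * x j := by
      rw [← sum_subset (subset_univ A) fun k _ hk => hout k hk,
        sum_congr rfl fun k hk => hA k hk j hj, sum_const, nsmul_eq_mul]
    have hA0 : (#A : ℝ) ≠ 0 := Nat.cast_ne_zero.2 (card_ne_zero_of_mem hj)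
    rw [hsumA] at hsum
    exact (mul_eq_zero.1 hsum).resolve_left hA0
  · exact hout j hj

section Contributions

variable {n : ℕ} {u : Finset (Fin n) → ℝ} {i j : Fin n}

lemma contrib_eq_zero_iff : contrib u i = 0 ↔ ∀ S, u (insert i S) = u S := by
  unfold contrib
  split_ifs with h <;> simp [h]

lemma contrib_eq_zero_or_eq_one (u : Finset (Fin n) → ℝ) (i : Fin n) :
    contrib u i = 0 ∨ contrib u i = 1 := by
  unfold contrib
  split_ifs <;> simp

lemma contrib_nonneg (u : Finset (Fin n) → ℝ) (i : Fin n) : 0 ≤ contrib u i := by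
  rcases contrib_eq_zero_or_eq_one u i with h | h <;> simp [h]

lemma forall_insert_eq_of_swap
    (hswap : ∀ S, i ∉ S → j ∉ S → u (insert i S) = u (insert j S))
    (hi : ∀ S, u (insert i S) = u S) (S : Finset (Fin n)) : u (insert j S) = u S := by
  by_cases hjS : j ∈ S
  · rw [insert_eq_of_mem hjS]
  by_cases hiS : i ∈ S
  · have hi' : i ∉ S.erase i := notMem_erase i S
    have hj' : j ∉ S.erase i := fun h => hjS (mem_of_mem_erase h)
    calc u (insert j S) = u (insert i (insert j (S.erase i))) := by
          rw [insert_comm, insert_erase hiS]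
      _ = u (insert i (S.erase i)) := by rw [hi, hswap _ hi' hj']
      _ = u S := by rw [insert_erase hiS]
  · rw [← hswap S hiS hjS, hi]

lemma contrib_eq_of_swap
    (hswap : ∀ S, i ∉ S → j ∉ S → u (insert i S) = u (insert j S)) :
    contrib u i = contrib u j := by
  have hiff : (∀ S, u (insert i S) = u S) ↔ ∀ S, u (insert j S) = u S :=
    ⟨forall_insert_eq_of_swap hswap,
      forall_insert_eq_of_swap fun S hj hi => (hswap S hi hj).symm⟩
  simp only [contrib, hiff]

noncomputable def contributors (u : Finset (Fin n) → ℝ) : Finset (Fin n) :=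
  univ.filter fun j => contrib u j = 1

lemma mem_contributors : j ∈ contributors u ↔ contrib u j = 1 := by
  simp [contributors]

lemma notMem_contributors : j ∉ contributors u ↔ contrib u j = 0 := by
  rw [mem_contributors]
  rcases contrib_eq_zero_or_eq_one u j with h | h <;> simp [h]

lemma apply_union_eq_of_contrib_eq_zero {D : Finset (Fin n)} (hD : ∀ j ∈ D, contrib u j = 0)
    (T : Finset (Fin n)) : u (D ∪ T) = u T := by
  induction D using Finset.induction_on with
  | empty => rw [empty_union]
  | insert j D _ ih =>
    rw [insert_union, contrib_eq_zero_iff.1 (hD j (mem_insert_self j D)),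
      ih fun k hk => hD k (mem_insert_of_mem hk)]

lemma apply_inter_contributors (u : Finset (Fin n) → ℝ) (T : Finset (Fin n)) :
    u (T ∩ contributors u) = u T := by
  conv_rhs => rw [← sdiff_union_inter T (contributors u)]
  refine (apply_union_eq_of_contrib_eq_zero (fun j hj => ?_) _).symm
  exact notMem_contributors.1 (mem_sdiff.1 hj).2

end Contributions

section AverageParticipation

variable {n : ℕ} {u v : Finset (Fin n) → ℝ} {i k : Fin n}

lemma AP_eq_zero_of_contrib_eq_zero (h : contrib u i = 0) : AP u i = 0 := by
  simp [AP, h]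

lemma AP_coeff_nonneg (u : Finset (Fin n) → ℝ) (i : Fin n) (S : Finset (Fin n)) :
    0 ≤ 1 / (2 ^ n - 1 : ℝ) * (contrib u i / ((∑ j ∈ S, contrib u j) + 1)) := by
  have h2n : (1 : ℝ) ≤ 2 ^ n := one_le_pow₀ one_le_two
  have hS : 0 ≤ ∑ j ∈ S, contrib u j := sum_nonneg fun j _ => contrib_nonneg u j
  exact mul_nonneg (div_nonneg zero_le_one (by linarith))
    (div_nonneg (contrib_nonneg u i) (by linarith))

lemma sum_contrib_div_mul_self (hu : u ∅ = 0) (T : Finset (Fin n)) :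
    ∑ i ∈ T, contrib u i / ((∑ j ∈ T.erase i, contrib u j) + 1) * u T = u T := by
  by_cases hσ : ∑ j ∈ T, contrib u j = 0
  · have hc : ∀ i ∈ T, contrib u i = 0 :=
      (sum_eq_zero_iff_of_nonneg fun j _ => contrib_nonneg u j).1 hσ
    have hT : T ∩ contributors u = ∅ := by
      refine eq_empty_of_forall_notMem fun j hj => ?_
      rw [mem_inter, mem_contributors] at hj
      simp [hc j hj.1] at hj
    rw [← apply_inter_contributors u T, hT, hu]
    simp
  · have hσi : ∀ i ∈ T, contrib u i / ((∑ j ∈ T.erase i, contrib u j) + 1)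
        = contrib u i / ∑ j ∈ T, contrib u j := by
      intro i hi
      rcases contrib_eq_zero_or_eq_one u i with h | h
      · simp [h]
      · rw [← add_sum_erase T _ hi, h, add_comm]
    rw [← sum_mul, sum_congr rfl hσi, ← sum_div, div_self hσ, one_mul]

theorem sum_AP (hu : u ∅ = 0) :
    ∑ i, AP u i = 1 / (2 ^ n - 1 : ℝ) * ∑ S ∈ (univ : Finset (Fin n)).powerset, u S := by
  have hAP : ∀ i, AP u i = ∑ T ∈ univ.powerset with i ∈ T,
      1 / (2 ^ n - 1 : ℝ) * (contrib u i / ((∑ j ∈ T.erase i, contrib u j) + 1)) * u T := by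
    intro i
    rw [AP, ← sum_powerset_erase_insert (mem_univ i)]
    refine sum_congr rfl fun S hS => ?_
    rw [erase_insert fun hiS => notMem_erase i univ (mem_powerset.1 hS hiS)]
  simp only [hAP, sum_filter]
  rw [sum_comm, mul_sum]
  refine sum_congr rfl fun T _ => ?_
  rw [sum_ite_mem, univ_inter]
  conv_rhs => rw [← sum_contrib_div_mul_self hu T, mul_sum]
  exact sum_congr rfl fun i _ => by ring

lemma AP_sub_AP (hc : contrib u i = contrib u k) (hik : i ≠ k) :
    AP u i - AP u k = ∑ S ∈ ((univ.erase i).erase k).powerset,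
      1 / (2 ^ n - 1 : ℝ) * (contrib u i / ((∑ j ∈ S, contrib u j) + 1))
        * (u (insert i S) - u (insert k S)) := by
  set R := (univ.erase i).erase k
  have hRi : univ.erase i = insert k R :=
    (insert_erase (mem_erase.2 ⟨hik.symm, mem_univ k⟩)).symm
  have hRk : univ.erase k = insert i R := by
    rw [show R = (univ.erase k).erase i from erase_right_comm]
    exact (insert_erase (mem_erase.2 ⟨hik, mem_univ i⟩)).symm
  have hkR : k ∉ R := notMem_erase k _
  have hiR : i ∉ R := fun h => notMem_erase i univ (mem_of_mem_erase h)
  rw [AP, AP, hRi, hRk, sum_powerset_insert hkR, sum_powerset_insert hiR]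
  have hcross : ∀ S ∈ R.powerset,
      1 / (2 ^ n - 1 : ℝ) * (contrib u i / ((∑ j ∈ insert k S, contrib u j) + 1))
          * u (insert i (insert k S))
        = 1 / (2 ^ n - 1 : ℝ) * (contrib u k / ((∑ j ∈ insert i S, contrib u j) + 1))
          * u (insert k (insert i S)) := by
    intro S hS
    rw [sum_insert fun h => hkR (mem_powerset.1 hS h),
      sum_insert fun h => hiR (mem_powerset.1 hS h), insert_comm, hc]
  rw [sum_congr rfl hcross, add_sub_add_right_eq_sub, ← sum_sub_distrib]
  refine sum_congr rfl fun S _ => ?_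
  rw [hc]
  ring

lemma AP_eq_of_swap (hswap : ∀ S, i ∉ S → k ∉ S → u (insert i S) = u (insert k S)) :
    AP u i = AP u k := by
  rcases eq_or_ne i k with rfl | hik
  · rfl
  rw [← sub_eq_zero, AP_sub_AP (contrib_eq_of_swap hswap) hik]
  refine sum_eq_zero fun S hS => ?_
  obtain ⟨⟨-, hiS⟩, hkS⟩ := by rwa [mem_powerset, subset_erase, subset_erase] at hS
  rw [hswap S hiS hkS, sub_self, mul_zero]

lemma AP_le_AP (hc : contrib u = contrib v) (hle : ∀ S, v (insert i S) ≤ u (insert i S)) :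
    AP v i ≤ AP u i := by
  rw [AP, AP, hc]
  exact sum_le_sum fun S _ => mul_le_mul_of_nonneg_left (hle S) (AP_coeff_nonneg v i S)

lemma AP_sub_AP_le_AP_sub_AP (hc : contrib u = contrib v) (hik : contrib u i = contrib u k)
    (hle : ∀ S, i ∉ S → k ∉ S →
      u (insert k S) - v (insert k S) ≤ u (insert i S) - v (insert i S)) :
    AP u k - AP v k ≤ AP u i - AP v i := by
  rcases eq_or_ne i k with rfl | hne
  · rfl
  rw [← sub_nonneg, sub_sub_sub_comm, AP_sub_AP hik hne, AP_sub_AP (hc ▸ hik) hne, hc,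
    ← sum_sub_distrib]
  refine sum_nonneg fun S hS => ?_
  obtain ⟨⟨-, hiS⟩, hkS⟩ := by rwa [mem_powerset, subset_erase, subset_erase] at hS
  rw [← mul_sub]
  exact mul_nonneg (AP_coeff_nonneg v i S) (by linarith [hle S hiS hkS])

end AverageParticipation

namespace Solution

variable (n : ℕ)

def IsAverageEfficient (ψ : (Finset (Fin n) → ℝ) → Fin n → ℝ) : Prop :=
  ∀ u, IsMonotoneGame n u →
    ∑ i, ψ u i = (1 / (2 ^ n - 1 : ℝ)) * ∑ S ∈ (Finset.univ : Finset (Fin n)).powerset, u S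

def IsSymmetric (ψ : (Finset (Fin n) → ℝ) → Fin n → ℝ) : Prop :=
  ∀ u, IsMonotoneGame n u → ∀ i j : Fin n,
    (∀ S : Finset (Fin n), i ∉ S → j ∉ S → u (insert i S) = u (insert j S)) → ψ u i = ψ u j

def IsInvariant (ψ : (Finset (Fin n) → ℝ) → Fin n → ℝ) : Prop :=
  ∀ u, IsMonotoneGame n u → ∀ i : Fin n, contrib u i = 0 → ψ u i = 0

def IsCParMonotone (ψ : (Finset (Fin n) → ℝ) → Fin n → ℝ) : Prop :=
  ∀ u v, IsMonotoneGame n u → IsMonotoneGame n v →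
    (∀ j : Fin n, contrib u j = contrib v j) → ∀ i : Fin n,
    (∀ S : Finset (Fin n), u (insert i S) ≥ v (insert i S)) → ψ u i ≥ ψ v i

def IsRelCParMonotone (ψ : (Finset (Fin n) → ℝ) → Fin n → ℝ) : Prop :=
  ∀ u v, IsMonotoneGame n u → IsMonotoneGame n v →
    (∀ j : Fin n, contrib u j = contrib v j) → ∀ i k : Fin n,
    contrib u i = contrib u k →
    (∀ S : Finset (Fin n), i ∉ S → k ∉ S →
      u (insert i S) - v (insert i S) ≥ u (insert k S) - v (insert k S)) →
    ψ u i - ψ v i ≥ ψ u k - ψ v k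

def APAxioms (ψ : (Finset (Fin n) → ℝ) → Fin n → ℝ) : Prop :=
  IsAverageEfficient n ψ ∧ IsSymmetric n ψ ∧ IsInvariant n ψ ∧ IsCParMonotone n ψ ∧
    IsRelCParMonotone n ψ

variable {n} {φ ψ : (Finset (Fin n) → ℝ) → Fin n → ℝ}

theorem apAxioms_AP : APAxioms n AP :=
  ⟨fun _ hu => sum_AP hu.1,
    fun _ _ _ _ hswap => AP_eq_of_swap hswap,
    fun _ _ _ hc => AP_eq_zero_of_contrib_eq_zero hc,
    fun _ _ _ _ hc _ hle => AP_le_AP (funext hc) hle,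
    fun _ _ _ _ hc _ _ hik hle => AP_sub_AP_le_AP_sub_AP (funext hc) hik hle⟩

theorem APAxioms.of_eqOn (hφ : APAxioms n φ)
    (h : ∀ u, IsMonotoneGame n u → ψ u = φ u) : APAxioms n ψ := by
  obtain ⟨hAE, hS, hI, hcP, hRcP⟩ := hφ
  refine ⟨fun u hu => ?_, fun u hu i j hswap => ?_, fun u hu i hc => ?_,
    fun u v hu hv hc i hle => ?_, fun u v hu hv hc i k hik hle => ?_⟩
  · simpa only [h u hu] using hAE u hu
  · simpa only [h u hu] using hS u hu i j hswap
  · simpa only [h u hu] using hI u hu i hc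
  · simpa only [h u hu, h v hv] using hcP u v hu hv hc i hle
  · simpa only [h u hu, h v hv] using hRcP u v hu hv hc i k hik hle

theorem APAxioms.eq_of_symmetric (hφ : APAxioms n φ) (hψ : APAxioms n ψ)
    {g : Finset (Fin n) → ℝ} (hg : IsMonotoneGame n g)
    (hsym : ∀ j ∈ contributors g, ∀ k ∈ contributors g, ∀ S, j ∉ S → k ∉ S →
      g (insert j S) = g (insert k S)) :
    φ g = ψ g := by
  obtain ⟨hAEφ, hSφ, hIφ, -, -⟩ := hφ
  obtain ⟨hAEψ, hSψ, hIψ, -, -⟩ := hψ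
  funext j
  refine sub_eq_zero.1 (eq_zero_of_sum_eq_zero_of_eqOn (x := fun j => φ g j - ψ g j)
    (A := contributors g) (fun j hj => ?_) (fun j hj k hk => ?_) ?_ j)
  · rw [notMem_contributors] at hj
    simp only [hIφ g hg j hj, hIψ g hg j hj, sub_zero]
  · simp only [hSφ g hg j k (hsym j hj k hk), hSψ g hg j k (hsym j hj k hk)]
  · simp only [sum_sub_distrib, hAEφ g hg, hAEψ g hg, sub_self]

structure IsSymmetricUpdate (g g' : Finset (Fin n) → ℝ) (A : Finset (Fin n)) : Prop where
  contrib_eq : contrib g' = contrib g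
  subset_contributors : A ⊆ contributors g
  eq_of_notMem : ∀ j ∈ contributors g, j ∉ A → ∀ S, g' (insert j S) = g (insert j S)
  sub_eq_sub : ∀ j ∈ A, ∀ k ∈ A, ∀ S, j ∉ S → k ∉ S →
    g' (insert j S) - g (insert j S) = g' (insert k S) - g (insert k S)

section SymmetricUpdate

variable {g g' : Finset (Fin n) → ℝ} {A : Finset (Fin n)}

theorem APAxioms.apply_eq_of_notMem (hψ : APAxioms n ψ) (hg : IsMonotoneGame n g)
    (hg' : IsMonotoneGame n g') (h : IsSymmetricUpdate g g' A) {j : Fin n} (hj : j ∉ A) :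
    ψ g' j = ψ g j := by
  obtain ⟨-, -, hI, hcP, -⟩ := hψ
  by_cases hjc : j ∈ contributors g
  · have hgj := h.eq_of_notMem j hjc hj
    exact le_antisymm
      (hcP g g' hg hg' (congrFun h.contrib_eq.symm) j fun S => (hgj S).le)
      (hcP g' g hg' hg (congrFun h.contrib_eq) j fun S => (hgj S).ge)
  · rw [notMem_contributors] at hjc
    rw [hI g hg j hjc, hI g' hg' j (by rw [h.contrib_eq, hjc])]

theorem APAxioms.sub_eq_sub_of_mem (hψ : APAxioms n ψ) (hg : IsMonotoneGame n g)
    (hg' : IsMonotoneGame n g') (h : IsSymmetricUpdate g g' A) {j k : Fin n} (hj : j ∈ A)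
    (hk : k ∈ A) : ψ g' j - ψ g j = ψ g' k - ψ g k := by
  obtain ⟨-, -, -, -, hRcP⟩ := hψ
  have hc : contrib g' j = contrib g' k := by
    rw [h.contrib_eq, mem_contributors.1 (h.subset_contributors hj),
      mem_contributors.1 (h.subset_contributors hk)]
  have hgjk := h.sub_eq_sub j hj k hk
  have hcg := congrFun h.contrib_eq
  exact le_antisymm
    (hRcP g' g hg' hg hcg k j hc.symm fun S hkS hjS => (hgjk S hjS hkS).le)
    (hRcP g' g hg' hg hcg j k hc fun S hjS hkS => (hgjk S hjS hkS).ge)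

theorem APAxioms.eq_of_isSymmetricUpdate (hφ : APAxioms n φ) (hψ : APAxioms n ψ)
    (hg : IsMonotoneGame n g) (hg' : IsMonotoneGame n g') (h : IsSymmetricUpdate g g' A)
    (heq : φ g = ψ g) : φ g' = ψ g' := by
  funext j
  have hzero := eq_zero_of_sum_eq_zero_of_eqOn
    (x := fun j => (φ g' j - φ g j) - (ψ g' j - ψ g j)) (A := A)
    (fun j hj => by
      simp only [hφ.apply_eq_of_notMem hg hg' h hj, hψ.apply_eq_of_notMem hg hg' h hj, sub_self])
    (fun j hj k hk => by
      simp only [hφ.sub_eq_sub_of_mem hg hg' h hj hk, hψ.sub_eq_sub_of_mem hg hg' h hj hk])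
    (by simp only [sum_sub_distrib, hφ.1 g hg, hφ.1 g' hg', hψ.1 g hg, hψ.1 g' hg', sub_self]) j
  rw [heq] at hzero
  linarith

end SymmetricUpdate

end Solution

section PaddedGame

variable {n : ℕ} {u : Finset (Fin n) → ℝ}

noncomputable def paddedGame (u : Finset (Fin n) → ℝ) (X : Finset (Finset (Fin n)))
    (T : Finset (Fin n)) : ℝ :=
  (u univ + 1) * #(T ∩ contributors u) +
    if T ∩ contributors u ∈ X then u (T ∩ contributors u) else 0

lemma paddedGame_lt_of_ssubset (hu : IsMonotoneGame n u) (X : Finset (Finset (Fin n)))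
    {S T : Finset (Fin n)} (hST : S ∩ contributors u ⊂ T ∩ contributors u) :
    paddedGame u X S < paddedGame u X T := by
  have hcard : (#(S ∩ contributors u) : ℝ) + 1 ≤ #(T ∩ contributors u) := by
    exact_mod_cast card_lt_card hST
  have hnonneg : ∀ A, 0 ≤ u A := fun A => hu.1 ▸ hu.2 ∅ A (empty_subset A)
  have hS : (if S ∩ contributors u ∈ X then u (S ∩ contributors u) else 0) ≤ u univ := by
    split_ifs
    exacts [hu.2 _ _ (subset_univ _), hnonneg univ]
  have hT : 0 ≤ if T ∩ contributors u ∈ X then u (T ∩ contributors u) else 0 := by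
    split_ifs
    exacts [hnonneg _, le_rfl]
  unfold paddedGame
  nlinarith [hnonneg univ]

lemma isMonotoneGame_paddedGame (hu : IsMonotoneGame n u) (X : Finset (Finset (Fin n))) :
    IsMonotoneGame n (paddedGame u X) := by
  refine ⟨by simp [paddedGame, hu.1], fun S T hST => ?_⟩
  have hsub : S ∩ contributors u ⊆ T ∩ contributors u := inter_subset_inter_right hST
  rcases hsub.eq_or_ssubset with heq | hlt
  · rw [paddedGame, paddedGame, heq]
  · exact (paddedGame_lt_of_ssubset hu X hlt).le

lemma contrib_paddedGame (hu : IsMonotoneGame n u) (X : Finset (Finset (Fin n))) :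
    contrib (paddedGame u X) = contrib u := by
  funext j
  by_cases hj : j ∈ contributors u
  · rw [mem_contributors.1 hj, contrib, if_neg]
    intro hnull
    have hlt := paddedGame_lt_of_ssubset hu X (S := ∅) (T := {j}) (by simp [hj])
    exact hlt.ne (hnull ∅).symm
  · rw [notMem_contributors.1 hj, contrib_eq_zero_iff]
    intro S
    simp only [paddedGame, insert_inter_of_notMem hj]

lemma contributors_paddedGame (hu : IsMonotoneGame n u) (X : Finset (Finset (Fin n))) :
    contributors (paddedGame u X) = contributors u := by
  simp only [contributors, contrib_paddedGame hu]

lemma paddedGame_insert_of_ne {A T : Finset (Fin n)} (X : Finset (Finset (Fin n)))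
    (hT : T ∩ contributors u ≠ A) : paddedGame u (insert A X) T = paddedGame u X T := by
  simp only [paddedGame, mem_insert, hT, false_or]

lemma paddedGame_powerset_contributors (T : Finset (Fin n)) :
    paddedGame u (contributors u).powerset T = (u univ + 1) * #(T ∩ contributors u) + u T := by
  rw [paddedGame, if_pos (mem_powerset.2 inter_subset_right),
    apply_inter_contributors u]

lemma card_insert_inter_contributors {j : Fin n} (hj : j ∈ contributors u) {S : Finset (Fin n)}
    (hjS : j ∉ S) : #(insert j S ∩ contributors u) = #(S ∩ contributors u) + 1 := by
  rw [insert_inter_of_mem hj, card_insert_of_notMem fun h => hjS (mem_inter.1 h).1]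

lemma paddedGame_empty_swap {j k : Fin n} (hj : j ∈ contributors u)
    (hk : k ∈ contributors u) {S : Finset (Fin n)} (hjS : j ∉ S) (hkS : k ∉ S) :
    paddedGame u ∅ (insert j S) = paddedGame u ∅ (insert k S) := by
  simp only [paddedGame, notMem_empty, if_false, card_insert_inter_contributors hj hjS,
    card_insert_inter_contributors hk hkS]

lemma isSymmetricUpdate_paddedGame_insert (hu : IsMonotoneGame n u) {A : Finset (Fin n)}
    (hA : A ⊆ contributors u) (X : Finset (Finset (Fin n))) :
    Solution.IsSymmetricUpdate (paddedGame u X) (paddedGame u (insert A X)) A where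
  contrib_eq := by rw [contrib_paddedGame hu, contrib_paddedGame hu]
  subset_contributors := by rwa [contributors_paddedGame hu]
  eq_of_notMem j hj hjA S := by
    rw [contributors_paddedGame hu] at hj
    refine paddedGame_insert_of_ne X fun hSA => hjA ?_
    exact hSA ▸ mem_inter.2 ⟨mem_insert_self j S, hj⟩
  sub_eq_sub j hj k hk S hjS hkS := by
    rcases eq_or_ne j k with rfl | hjk
    · rfl
    have hjA : insert j S ∩ contributors u ≠ A := fun hSA =>
      hkS ((mem_insert.1 (mem_inter.1 (hSA ▸ hk)).1).resolve_left hjk.symm)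
    have hkA : insert k S ∩ contributors u ≠ A := fun hSA =>
      hjS ((mem_insert.1 (mem_inter.1 (hSA ▸ hj)).1).resolve_left hjk)
    rw [paddedGame_insert_of_ne X hjA, paddedGame_insert_of_ne X hkA, sub_self, sub_self]

lemma isSymmetricUpdate_paddedGame_powerset (hu : IsMonotoneGame n u) :
    Solution.IsSymmetricUpdate (paddedGame u (contributors u).powerset) u (contributors u) where
  contrib_eq := (contrib_paddedGame hu _).symm
  subset_contributors := (contributors_paddedGame hu _).ge
  eq_of_notMem j hj hjA := by
    rw [contributors_paddedGame hu] at hj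
    exact absurd hj hjA
  sub_eq_sub j hj k hk S hjS hkS := by
    simp only [paddedGame_powerset_contributors, card_insert_inter_contributors hj hjS,
      card_insert_inter_contributors hk hkS]
    ring

end PaddedGame

namespace Solution

variable {n : ℕ} {φ ψ : (Finset (Fin n) → ℝ) → Fin n → ℝ} {u : Finset (Fin n) → ℝ}

theorem APAxioms.eq_on_paddedGame (hφ : APAxioms n φ) (hψ : APAxioms n ψ)
    (hu : IsMonotoneGame n u) {X : Finset (Finset (Fin n))}
    (hX : X ⊆ (contributors u).powerset) : φ (paddedGame u X) = ψ (paddedGame u X) := by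
  induction X using Finset.induction_on with
  | empty =>
    refine hφ.eq_of_symmetric hψ (isMonotoneGame_paddedGame hu ∅) fun j hj k hk S hjS hkS => ?_
    rw [contributors_paddedGame hu] at hj hk
    exact paddedGame_empty_swap hj hk hjS hkS
  | insert A X _ ih =>
    rw [insert_subset_iff, mem_powerset] at hX
    exact hφ.eq_of_isSymmetricUpdate hψ (isMonotoneGame_paddedGame hu X)
      (isMonotoneGame_paddedGame hu _) (isSymmetricUpdate_paddedGame_insert hu hX.1 X) (ih hX.2)

theorem APAxioms.eq (hφ : APAxioms n φ) (hψ : APAxioms n ψ) (hu : IsMonotoneGame n u) :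
    φ u = ψ u :=
  hφ.eq_of_isSymmetricUpdate hψ (isMonotoneGame_paddedGame hu _) hu
    (isSymmetricUpdate_paddedGame_powerset hu) (hφ.eq_on_paddedGame hψ hu subset_rfl)

end Solution

theorem ap_uniqueness_general (n : ℕ)
    (ψ : (Finset (Fin n) → ℝ) → Fin n → ℝ) :
    ((∀ u, IsMonotoneGame n u →
        ∑ i, ψ u i =
          (1 / (2 ^ n - 1 : ℝ)) * ∑ S ∈ (Finset.univ : Finset (Fin n)).powerset, u S) ∧
     (∀ u, IsMonotoneGame n u → ∀ i j : Fin n,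
        (∀ S : Finset (Fin n), i ∉ S → j ∉ S → u (insert i S) = u (insert j S)) →
        ψ u i = ψ u j) ∧
     (∀ u, IsMonotoneGame n u → ∀ i : Fin n, contrib u i = 0 → ψ u i = 0) ∧
     (∀ u v, IsMonotoneGame n u → IsMonotoneGame n v →
        (∀ j : Fin n, contrib u j = contrib v j) → ∀ i : Fin n,
        (∀ S : Finset (Fin n), u (insert i S) ≥ v (insert i S)) → ψ u i ≥ ψ v i) ∧
     (∀ u v, IsMonotoneGame n u → IsMonotoneGame n v →
        (∀ j : Fin n, contrib u j = contrib v j) → ∀ i k : Fin n,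
        contrib u i = contrib u k →
        (∀ S : Finset (Fin n), i ∉ S → k ∉ S →
          u (insert i S) - v (insert i S) ≥ u (insert k S) - v (insert k S)) →
        ψ u i - ψ v i ≥ ψ u k - ψ v k)) ↔
    (∀ u, IsMonotoneGame n u → ∀ i, ψ u i = AP u i) := by
  change Solution.APAxioms n ψ ↔ _
  exact ⟨fun hψ u hu i => congrFun (hψ.eq Solution.apAxioms_AP hu) i,
    fun h => Solution.apAxioms_AP.of_eqOn fun u hu => funext (h u hu)⟩

/-- A solution on the class of monotone games satisfies average efficiency, symmetry,
invariance, c-participation monotonicity and relative c-participation monotonicity iff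
it is the average participation solution; in particular AP is the unique such solution. -/
theorem ap_uniqueness (n : ℕ) (hn : 1 ≤ n)
    (ψ : (Finset (Fin n) → ℝ) → Fin n → ℝ) :
    ((∀ u, IsMonotoneGame n u →
        ∑ i, ψ u i =
          (1 / (2 ^ n - 1 : ℝ)) * ∑ S ∈ (Finset.univ : Finset (Fin n)).powerset, u S) ∧
     (∀ u, IsMonotoneGame n u → ∀ i j : Fin n,
        (∀ S : Finset (Fin n), i ∉ S → j ∉ S → u (insert i S) = u (insert j S)) →
        ψ u i = ψ u j) ∧
     (∀ u, IsMonotoneGame n u → ∀ i : Fin n, contrib u i = 0 → ψ u i = 0) ∧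
     (∀ u v, IsMonotoneGame n u → IsMonotoneGame n v →
        (∀ j : Fin n, contrib u j = contrib v j) → ∀ i : Fin n,
        (∀ S : Finset (Fin n), u (insert i S) ≥ v (insert i S)) → ψ u i ≥ ψ v i) ∧
     (∀ u v, IsMonotoneGame n u → IsMonotoneGame n v →
        (∀ j : Fin n, contrib u j = contrib v j) → ∀ i k : Fin n,
        contrib u i = contrib u k →
        (∀ S : Finset (Fin n), i ∉ S → k ∉ S →
          u (insert i S) - v (insert i S) ≥ u (insert k S) - v (insert k S)) →
        ψ u i - ψ v i ≥ ψ u k - ψ v k)) ↔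
    (∀ u, IsMonotoneGame n u → ∀ i, ψ u i = AP u i) :=
  ap_uniqueness_general n ψ
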